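/- arXiv:1607.05001 — 5 statements merged into one kernel-verified Lean document; each statement's English description precedes it below -/
import Mathlib

section
/- Let A = (a_{cv}) be an m×n real matrix with nonnegative entries and no all-zero column, let x ∈ ℝ^n_{≥0} be a nonnegative signal, and let y = Ax. Then for every iteration ℓ ≥ 0 and every variable node v ∈ V, the IPA bounds satisfy 0 ≤ μ^{(ℓ)}_v ≤ x_v ≤ M^{(ℓ)}_v. -/
open scoped Classical
open Finset

variable {C V : Type*} [Fintype C] [Fintype V]

/-- The IPA lower/upper bounds `(μ^{(ℓ)}, M^{(ℓ)})` computed from measurement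
matrix `A` and measurement vector `y`. -/
noncomputable def ipa (A : C → V → ℝ) (y : C → ℝ) : ℕ → (V → ℝ) × (V → ℝ)
  | 0 => (fun _ => 0,
      fun v => sInf {r : ℝ | ∃ c, A c v ≠ 0 ∧ r = y c / A c v})
  | ℓ + 1 =>
      (fun v => sSup {r : ℝ | ∃ c, A c v ≠ 0 ∧
          r = max 0 ((y c - ∑ v' ∈ Finset.univ.filter (fun v' => v' ≠ v),
              A c v' * (ipa A y ℓ).2 v') / A c v)},
       fun v => sInf {r : ℝ | ∃ c, A c v ≠ 0 ∧
          r = (y c - ∑ v' ∈ Finset.univ.filter (fun v' => v' ≠ v),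
              A c v' * (ipa A y ℓ).1 v') / A c v})

/-- IPA lower bound `μ^{(ℓ)}_v`. -/
noncomputable def ipaMu (A : C → V → ℝ) (y : C → ℝ) (ℓ : ℕ) (v : V) : ℝ := (ipa A y ℓ).1 v

/-- IPA upper bound `M^{(ℓ)}_v`. -/
noncomputable def ipaM (A : C → V → ℝ) (y : C → ℝ) (ℓ : ℕ) (v : V) : ℝ := (ipa A y ℓ).2 v

/-- Neighbourhood `N(v)` of a variable node. -/
noncomputable def Nv (A : C → V → ℝ) (v : V) : Finset C := Finset.univ.filter fun c => A c v ≠ 0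

/-- Neighbourhood `N(c)` of a measurement node. -/
noncomputable def Nc (A : C → V → ℝ) (c : C) : Finset V := Finset.univ.filter fun v => A c v ≠ 0

/-- Neighbourhood `N(T)` of a set of variable nodes. -/
noncomputable def NT (A : C → V → ℝ) (T : Finset V) : Finset C :=
  Finset.univ.filter fun c => ∃ v ∈ T, A c v ≠ 0

/-- `N_T(c) = N(c) ∩ T`. -/
noncomputable def NTc (A : C → V → ℝ) (T : Finset V) (c : C) : Finset V :=
  T.filter fun v => A c v ≠ 0

/-- A stopping set: every neighbouring measurement node is connected at least twice to `T`. -/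
def StoppingSet (A : C → V → ℝ) (T : Finset V) : Prop :=
  ∀ c ∈ NT A T, 2 ≤ (NTc A T c).card

/-- The set `S` of variable nodes outside `T` connected only to `N(T)`. -/
noncomputable def Sset (A : C → V → ℝ) (T : Finset V) : Finset V :=
  Finset.univ.filter fun v => v ∉ T ∧ ∀ c, A c v ≠ 0 → c ∈ NT A T

/-- The termatiko condition on a set `T` of variable nodes. -/
def TermatikoCond (A : C → V → ℝ) (T : Finset V) : Prop :=
  ∀ c ∈ NT A T,
    (∃ v ∈ Sset A T, A c v ≠ 0) ∨
    2 ≤ ((NTc A T c).filter fun v => ∀ c', A c' v ≠ 0 → 2 ≤ (NTc A T c').card).card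

/-- Real-valued indicator vector `1_T` of a set of variable nodes. -/
noncomputable def indVec (T : Finset V) : V → ℝ := fun v => if v ∈ T then 1 else 0

/-- The measurement vector `A · 1_T`. -/
noncomputable def measT (A : C → V → ℝ) (T : Finset V) : C → ℝ :=
  fun c => ∑ v, A c v * indVec T v

/-- `T` is a termatiko set of `A`: the IPA run on `A · 1_T` keeps all lower bounds at zero. -/
def IsTermatiko (A : C → V → ℝ) (T : Finset V) : Prop :=
  ∀ (ℓ : ℕ) (v : V), ipaMu A (measT A T) ℓ v = 0

/-- `A` is a binary (0/1) matrix. -/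
def Binary (A : C → V → ℝ) : Prop := ∀ c v, A c v = 0 ∨ A c v = 1

/-- `A` has no all-zero column. -/
def NoZeroCol (A : C → V → ℝ) : Prop := ∀ v, ∃ c, A c v ≠ 0

/-- `A` has nonnegative entries. -/
def MatNonneg (A : C → V → ℝ) : Prop := ∀ c v, 0 ≤ A c v

/-! The true signal `x` is a fixed point of every message: the message from `c` to `v` computed
from `x` is exactly `x v`, since `y = A x`. A message is antitone in the bounds it is computed
from, because `A` is nonnegative. Hence upper bounds above `x` produce lower messages below `x`
and lower bounds below `x` produce upper messages above `x`, and induction on `ℓ` closes. -/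

/-- The quantity `(y_c − Σ_{v' ≠ v} a_{cv'} z_{v'}) / a_{cv}` from which the messages
`μ_{c→v}` (with `z = M`) and `M_{c→v}` (with `z = μ`) are formed. -/
noncomputable def ipaMessage (A : C → V → ℝ) (y : C → ℝ) (c : C) (v : V) (z : V → ℝ) : ℝ :=
  (y c - ∑ v' ∈ Finset.univ.filter (fun v' => v' ≠ v), A c v' * z v') / A c v

lemma sSup_max_zero_nonneg {p : C → Prop} {f : C → ℝ} (hp : ∃ c, p c) :
    0 ≤ sSup {r : ℝ | ∃ c, p c ∧ r = max 0 (f c)} := by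
  obtain ⟨c, hc⟩ := hp
  have hfin : {r : ℝ | ∃ c, p c ∧ r = max 0 (f c)}.Finite :=
    (Set.finite_range fun c => max 0 (f c)).subset fun _ ⟨c, _, hr⟩ => ⟨c, hr.symm⟩
  exact le_csSup_of_le hfin.bddAbove ⟨c, hc, rfl⟩ (le_max_left _ _)

section Message

omit [Fintype C]

variable {A : C → V → ℝ} {x : V → ℝ} {y : C → ℝ} {c : C} {v : V}

lemma ipaMessage_self (hy : y c = ∑ v', A c v' * x v') (hcv : A c v ≠ 0) :
    ipaMessage A y c v x = x v := by
  rw [ipaMessage, hy, Finset.filter_ne', ← Finset.add_sum_erase _ _ (mem_univ v),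
    add_sub_cancel_right, mul_div_cancel_left₀ _ hcv]

lemma ipaMessage_antitone (hA : MatNonneg A) (hcv : 0 < A c v) :
    Antitone (ipaMessage A y c v) := fun _ _ hzw =>
  div_le_div_of_nonneg_right
    (sub_le_sub_left (sum_le_sum fun v' _ => mul_le_mul_of_nonneg_left (hzw v') (hA c v')) _)
    hcv.le

lemma ipaM_zero_eq_sInf_ipaMessage (A : C → V → ℝ) (y : C → ℝ) (v : V) :
    ipaM A y 0 v = sInf {r : ℝ | ∃ c, A c v ≠ 0 ∧ r = ipaMessage A y c v 0} := by
  simp [ipaM, ipa, ipaMessage]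

lemma le_sInf_ipaMessage (hA : MatNonneg A) (hv : ∃ c, A c v ≠ 0)
    (hy : ∀ c, y c = ∑ v', A c v' * x v') {z : V → ℝ} (hz : z ≤ x) :
    x v ≤ sInf {r : ℝ | ∃ c, A c v ≠ 0 ∧ r = ipaMessage A y c v z} := by
  obtain ⟨c₀, hc₀⟩ := hv
  refine le_csInf ⟨_, c₀, hc₀, rfl⟩ ?_
  rintro r ⟨c, hcv, rfl⟩
  calc x v = ipaMessage A y c v x := (ipaMessage_self (hy c) hcv).symm
    _ ≤ ipaMessage A y c v z := ipaMessage_antitone hA ((hA c v).lt_of_ne' hcv) hz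

lemma sSup_max_zero_ipaMessage_le (hA : MatNonneg A) (hv : ∃ c, A c v ≠ 0) (hxv : 0 ≤ x v)
    (hy : ∀ c, y c = ∑ v', A c v' * x v') {w : V → ℝ} (hw : x ≤ w) :
    sSup {r : ℝ | ∃ c, A c v ≠ 0 ∧ r = max 0 (ipaMessage A y c v w)} ≤ x v := by
  obtain ⟨c₀, hc₀⟩ := hv
  refine csSup_le ⟨_, c₀, hc₀, rfl⟩ ?_
  rintro r ⟨c, hcv, rfl⟩
  refine max_le hxv ?_
  calc ipaMessage A y c v w ≤ ipaMessage A y c v x :=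
        ipaMessage_antitone hA ((hA c v).lt_of_ne' hcv) hw
    _ = x v := ipaMessage_self (hy c) hcv

end Message

/-- the IPA bounds always sandwich the true signal:
`0 ≤ μ^{(ℓ)}_v ≤ x_v ≤ M^{(ℓ)}_v`. -/
theorem ipa_bounds_sandwich {m n : ℕ} (A : Fin m → Fin n → ℝ)
    (hA : MatNonneg A) (hcol : NoZeroCol A)
    (x : Fin n → ℝ) (hx : ∀ v, 0 ≤ x v)
    (y : Fin m → ℝ) (hy : ∀ c, y c = ∑ v, A c v * x v) :
    ∀ (ℓ : ℕ) (v : Fin n),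
      0 ≤ ipaMu A y ℓ v ∧ ipaMu A y ℓ v ≤ x v ∧ x v ≤ ipaM A y ℓ v := by
  intro ℓ
  induction ℓ with
  | zero =>
    intro v
    rw [ipaM_zero_eq_sInf_ipaMessage]
    exact ⟨le_rfl, hx v, le_sInf_ipaMessage hA (hcol v) hy hx⟩
  | succ ℓ ih =>
    intro v
    exact ⟨sSup_max_zero_nonneg (hcol v),
      sSup_max_zero_ipaMessage_le hA (hcol v) (hx v) hy fun v' => (ih v').2.2,
      le_sInf_ipaMessage hA (hcol v) hy fun v' => (ih v').2.1⟩
end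

section
/- Let A = (a_{cv}) be an m×n real matrix with nonnegative entries and no all-zero column, and let B ∈ {0,1}^{m×n} be its support pattern, i.e., b_{cv} = 1 iff a_{cv} ≠ 0. Let x ∈ ℝ^n_{≥0} and z ∈ {0,1}^n satisfy supp(z) = supp(x), and set y = Ax, s = Bz. Denote by μ^{(ℓ)}_v, M^{(ℓ)}_v the IPA bounds computed from (y, A) and by λ^{(ℓ)}_v, Λ^{(ℓ)}_v the IPA bounds computed from (s, B). Then for every ℓ ≥ 0: {v ∈ V : μ^{(ℓ)}_v = x_v} = {v ∈ V : λ^{(ℓ)}_v = z_v} and {v ∈ V : M^{(ℓ)}_v = x_v} = {v ∈ V : Λ^{(ℓ)}_v = z_v}. In particular, the IPA recovers position v of x if and only if it recovers position v of z, so only the positions of the nonzero entries of A and of x matter for recovery. -/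
open scoped Classical
open Finset

variable {C V : Type*} [Fintype C] [Fintype V]

/-! Since `y = A x`, the message `(y_c - Σ_{v' ≠ v} a_{cv'} g_{v'}) / a_{cv}` equals
`x_v + Σ_{v' ≠ v} a_{cv'} (x_{v'} - g_{v'}) / a_{cv}`. By induction `μ^{(ℓ)} ≤ x ≤ M^{(ℓ)}`, so
all correction terms in a message have the same sign, and a message is exact iff the bounds it
uses are exact at every other neighbour of its check node. Hence `M^{(ℓ+1)}_v = x_v` iff some
`c ∈ N(v)` sees only exact lower bounds `μ^{(ℓ)}` on `N(c) \ {v}`, and `μ^{(ℓ+1)}_v = x_v` iff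
`x_v = 0` or some `c ∈ N(v)` sees only exact upper bounds. These rules involve only the support
patterns of `A` and of `x`, so they are the same for `(A, x)` and `(B, z)`. -/

lemma sInf_eq_iff_exists {ι : Type*} [Finite ι] {p : ι → Prop} {f : ι → ℝ} {t : ℝ}
    (hp : ∃ i, p i) (ht : ∀ i, p i → t ≤ f i) :
    sInf {r | ∃ i, p i ∧ r = f i} = t ↔ ∃ i, p i ∧ f i = t := by
  have hfin : {r | ∃ i, p i ∧ r = f i}.Finite :=
    (Set.finite_range f).subset (by rintro r ⟨i, -, rfl⟩; exact ⟨i, rfl⟩)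
  have hne : {r | ∃ i, p i ∧ r = f i}.Nonempty := hp.elim fun i hi => ⟨f i, i, hi, rfl⟩
  constructor
  · rintro rfl
    obtain ⟨i, hi, hfi⟩ := hne.csInf_mem hfin
    exact ⟨i, hi, hfi.symm⟩
  · rintro ⟨i, hi, rfl⟩
    exact IsLeast.csInf_eq ⟨⟨i, hi, rfl⟩, by rintro r ⟨j, hj, rfl⟩; exact ht j hj⟩

lemma sSup_eq_iff_exists {ι : Type*} [Finite ι] {p : ι → Prop} {f : ι → ℝ} {t : ℝ}
    (hp : ∃ i, p i) (ht : ∀ i, p i → f i ≤ t) :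
    sSup {r | ∃ i, p i ∧ r = f i} = t ↔ ∃ i, p i ∧ f i = t := by
  have key := sInf_eq_iff_exists (f := fun i => -f i) (t := -t) hp fun i hi =>
    neg_le_neg (ht i hi)
  have hset : {r | ∃ i, p i ∧ r = -f i} = -{r | ∃ i, p i ∧ r = f i} := by
    ext r; simp [neg_eq_iff_eq_neg]
  rw [hset, Real.sInf_neg, neg_inj] at key
  simpa only [neg_inj] using key

lemma max_zero_eq_iff {m t : ℝ} (ht : 0 ≤ t) (hm : m ≤ t) : max 0 m = t ↔ t = 0 ∨ m = t := by
  grind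

/-- With `a = A c` and `b = y c`, the IPA messages are `M^{(ℓ)}_{c→v} = rowBound a b μ^{(ℓ-1)} v`
and `μ^{(ℓ)}_{c→v} = max 0 (rowBound a b M^{(ℓ-1)} v)`. -/
noncomputable def rowBound (a : V → ℝ) (b : ℝ) (g : V → ℝ) (v : V) : ℝ :=
  (b - ∑ v' ∈ Finset.univ.filter (fun v' => v' ≠ v), a v' * g v') / a v

section RowBound

variable {a x g : V → ℝ} {b : ℝ} {v : V}

lemma rowBound_sub_self (hb : b = ∑ v, a v * x v) (hv : a v ≠ 0) :
    rowBound a b g v - x v = (∑ v' ∈ univ.erase v, a v' * (x v' - g v')) / a v := by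
  rw [rowBound, filter_ne', hb, ← add_sum_erase _ _ (mem_univ v), eq_div_iff hv, sub_mul,
    div_mul_cancel₀ _ hv]
  simp only [mul_sub, sum_sub_distrib]
  ring

lemma rowBound_neg (b : ℝ) (g : V → ℝ) : rowBound a (-b) (-g) v = -rowBound a b g v := by
  simp only [rowBound, Pi.neg_apply, mul_neg, sum_neg_distrib, sub_neg_eq_add]
  ring

lemma self_le_rowBound (ha : 0 ≤ a) (hb : b = ∑ v, a v * x v) (hv : a v ≠ 0) (hg : g ≤ x) :
    x v ≤ rowBound a b g v := by
  rw [← sub_nonneg, rowBound_sub_self hb hv]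
  exact div_nonneg (sum_nonneg fun v' _ => mul_nonneg (ha v') (sub_nonneg.2 (hg v'))) (ha v)

lemma rowBound_eq_self_iff_of_le (ha : 0 ≤ a) (hb : b = ∑ v, a v * x v) (hv : a v ≠ 0)
    (hg : g ≤ x) : rowBound a b g v = x v ↔ ∀ v' ≠ v, a v' ≠ 0 → g v' = x v' := by
  rw [← sub_eq_zero, rowBound_sub_self hb hv, div_eq_zero_iff, or_iff_left hv,
    sum_eq_zero_iff_of_nonneg fun v' _ => mul_nonneg (ha v') (sub_nonneg.2 (hg v'))]
  simp only [mem_erase, mem_univ, and_true, mul_eq_zero, sub_eq_zero]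
  grind

lemma rowBound_le_self (ha : 0 ≤ a) (hb : b = ∑ v, a v * x v) (hv : a v ≠ 0) (hg : x ≤ g) :
    rowBound a b g v ≤ x v := by
  have := self_le_rowBound (x := -x) (b := -b) (g := -g) ha (by simp [hb]) hv (neg_le_neg hg)
  rwa [rowBound_neg, Pi.neg_apply, neg_le_neg_iff] at this

lemma rowBound_eq_self_iff_of_ge (ha : 0 ≤ a) (hb : b = ∑ v, a v * x v) (hv : a v ≠ 0)
    (hg : x ≤ g) : rowBound a b g v = x v ↔ ∀ v' ≠ v, a v' ≠ 0 → g v' = x v' := by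
  have := rowBound_eq_self_iff_of_le (x := -x) (b := -b) (g := -g) ha (by simp [hb]) hv
    (neg_le_neg hg)
  simpa only [rowBound_neg, Pi.neg_apply, neg_inj] using this

end RowBound

section Ipa

variable {C V : Type*} [Fintype V] {A : C → V → ℝ} {x g : V → ℝ} {y : C → ℝ}

lemma ipaM_zero (A : C → V → ℝ) (y : C → ℝ) (v : V) :
    ipaM A y 0 v = sInf {r | ∃ c, A c v ≠ 0 ∧ r = rowBound (A c) (y c) (ipaMu A y 0) v} := by
  simp [ipaM, ipaMu, ipa, rowBound]

lemma ipaM_succ (A : C → V → ℝ) (y : C → ℝ) (ℓ : ℕ) (v : V) :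
    ipaM A y (ℓ + 1) v =
      sInf {r | ∃ c, A c v ≠ 0 ∧ r = rowBound (A c) (y c) (ipaMu A y ℓ) v} :=
  rfl

lemma ipaMu_succ (A : C → V → ℝ) (y : C → ℝ) (ℓ : ℕ) (v : V) :
    ipaMu A y (ℓ + 1) v =
      sSup {r | ∃ c, A c v ≠ 0 ∧ r = max 0 (rowBound (A c) (y c) (ipaM A y ℓ) v)} :=
  rfl

lemma le_sInf_rowBound (hA : MatNonneg A) (hcol : NoZeroCol A)
    (hy : ∀ c, y c = ∑ v, A c v * x v) (hg : g ≤ x) (v : V) :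
    x v ≤ sInf {r | ∃ c, A c v ≠ 0 ∧ r = rowBound (A c) (y c) g v} := by
  obtain ⟨c₀, hc₀⟩ := hcol v
  refine le_csInf ⟨_, c₀, hc₀, rfl⟩ ?_
  rintro r ⟨c, hc, rfl⟩
  exact self_le_rowBound (hA c) (hy c) hc hg

lemma sSup_max_rowBound_le (hA : MatNonneg A) (hcol : NoZeroCol A) (hx : 0 ≤ x)
    (hy : ∀ c, y c = ∑ v, A c v * x v) (hg : x ≤ g) (v : V) :
    sSup {r | ∃ c, A c v ≠ 0 ∧ r = max 0 (rowBound (A c) (y c) g v)} ≤ x v := by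
  obtain ⟨c₀, hc₀⟩ := hcol v
  refine csSup_le ⟨_, c₀, hc₀, rfl⟩ ?_
  rintro r ⟨c, hc, rfl⟩
  exact max_le (hx v) (rowBound_le_self (hA c) (hy c) hc hg)

lemma sInf_rowBound_eq_self_iff [Finite C] (hA : MatNonneg A) (hcol : NoZeroCol A)
    (hy : ∀ c, y c = ∑ v, A c v * x v) (hg : g ≤ x) (v : V) :
    sInf {r | ∃ c, A c v ≠ 0 ∧ r = rowBound (A c) (y c) g v} = x v ↔
      ∃ c, A c v ≠ 0 ∧ ∀ v' ≠ v, A c v' ≠ 0 → g v' = x v' := by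
  rw [sInf_eq_iff_exists (hcol v) fun c hc => self_le_rowBound (hA c) (hy c) hc hg]
  exact exists_congr fun c => and_congr_right fun hc =>
    rowBound_eq_self_iff_of_le (hA c) (hy c) hc hg

lemma sSup_max_rowBound_eq_self_iff [Finite C] (hA : MatNonneg A) (hcol : NoZeroCol A)
    (hx : 0 ≤ x) (hy : ∀ c, y c = ∑ v, A c v * x v) (hg : x ≤ g) (v : V) :
    sSup {r | ∃ c, A c v ≠ 0 ∧ r = max 0 (rowBound (A c) (y c) g v)} = x v ↔
      x v = 0 ∨ ∃ c, A c v ≠ 0 ∧ ∀ v' ≠ v, A c v' ≠ 0 → g v' = x v' := by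
  have hxv : 0 ≤ x v := hx v
  rw [sSup_eq_iff_exists (hcol v) fun c hc =>
    max_le hxv (rowBound_le_self (hA c) (hy c) hc hg)]
  have hmax : ∀ c, A c v ≠ 0 → (max 0 (rowBound (A c) (y c) g v) = x v ↔
      x v = 0 ∨ ∀ v' ≠ v, A c v' ≠ 0 → g v' = x v') := fun c hc => by
    rw [max_zero_eq_iff hxv (rowBound_le_self (hA c) (hy c) hc hg),
      rowBound_eq_self_iff_of_ge (hA c) (hy c) hc hg]
  rw [exists_congr fun c => and_congr_right (hmax c)]
  obtain ⟨c₀, hc₀⟩ := hcol v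
  grind

theorem ipaMu_le_and_le_ipaM (hA : MatNonneg A) (hcol : NoZeroCol A) (hx : 0 ≤ x)
    (hy : ∀ c, y c = ∑ v, A c v * x v) (ℓ : ℕ) : ipaMu A y ℓ ≤ x ∧ x ≤ ipaM A y ℓ := by
  induction ℓ with
  | zero => exact ⟨hx, fun v => (ipaM_zero A y v).symm ▸ le_sInf_rowBound hA hcol hy hx v⟩
  | succ ℓ ih =>
    exact ⟨fun v => (ipaMu_succ A y ℓ v).symm ▸ sSup_max_rowBound_le hA hcol hx hy ih.2 v,
      fun v => (ipaM_succ A y ℓ v).symm ▸ le_sInf_rowBound hA hcol hy ih.1 v⟩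

theorem ipaM_zero_eq_self_iff [Finite C] (hA : MatNonneg A) (hcol : NoZeroCol A) (hx : 0 ≤ x)
    (hy : ∀ c, y c = ∑ v, A c v * x v) (v : V) :
    ipaM A y 0 v = x v ↔ ∃ c, A c v ≠ 0 ∧ ∀ v' ≠ v, A c v' ≠ 0 → ipaMu A y 0 v' = x v' := by
  rw [ipaM_zero]
  exact sInf_rowBound_eq_self_iff hA hcol hy (ipaMu_le_and_le_ipaM hA hcol hx hy 0).1 v

theorem ipaM_succ_eq_self_iff [Finite C] (hA : MatNonneg A) (hcol : NoZeroCol A) (hx : 0 ≤ x)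
    (hy : ∀ c, y c = ∑ v, A c v * x v) (ℓ : ℕ) (v : V) :
    ipaM A y (ℓ + 1) v = x v ↔
      ∃ c, A c v ≠ 0 ∧ ∀ v' ≠ v, A c v' ≠ 0 → ipaMu A y ℓ v' = x v' := by
  rw [ipaM_succ]
  exact sInf_rowBound_eq_self_iff hA hcol hy (ipaMu_le_and_le_ipaM hA hcol hx hy ℓ).1 v

theorem ipaMu_succ_eq_self_iff [Finite C] (hA : MatNonneg A) (hcol : NoZeroCol A) (hx : 0 ≤ x)
    (hy : ∀ c, y c = ∑ v, A c v * x v) (ℓ : ℕ) (v : V) :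
    ipaMu A y (ℓ + 1) v = x v ↔
      x v = 0 ∨ ∃ c, A c v ≠ 0 ∧ ∀ v' ≠ v, A c v' ≠ 0 → ipaM A y ℓ v' = x v' := by
  rw [ipaMu_succ]
  exact sSup_max_rowBound_eq_self_iff hA hcol hx hy (ipaMu_le_and_le_ipaM hA hcol hx hy ℓ).2 v

end Ipa

/-- the IPA behaves identically on `(y, A)` and on the binary
problem `(s, B)`, where `B` is the support pattern of `A` and `z` the binary
vector with the same support as `x`: at every iteration the sets of positions
where the lower (resp. upper) bound equals the true value coincide. -/
theorem ipa_binary_reduction {m n : ℕ} (A B : Fin m → Fin n → ℝ)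
    (hA : MatNonneg A) (hcol : NoZeroCol A)
    (hB : ∀ c v, B c v = if A c v = 0 then 0 else 1)
    (x z : Fin n → ℝ) (hx : ∀ v, 0 ≤ x v) (hz : ∀ v, z v = 0 ∨ z v = 1)
    (hsupp : ∀ v, x v ≠ 0 ↔ z v ≠ 0)
    (y s : Fin m → ℝ)
    (hy : ∀ c, y c = ∑ v, A c v * x v) (hs : ∀ c, s c = ∑ v, B c v * z v) :
    ∀ (ℓ : ℕ) (v : Fin n),
      (ipaMu A y ℓ v = x v ↔ ipaMu B s ℓ v = z v) ∧
      (ipaM A y ℓ v = x v ↔ ipaM B s ℓ v = z v) := by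
  have hBA : ∀ c v, B c v = 0 ↔ A c v = 0 := fun c v => by rw [hB]; split_ifs <;> simp [*]
  have hBnonneg : MatNonneg B := fun c v => by rw [hB]; split_ifs <;> norm_num
  have hcolB : NoZeroCol B := fun v => (hcol v).imp fun c => (hBA c v).not.2
  have hz₀ : 0 ≤ z := fun v => (hz v).elim (·.symm.le) fun h => h ▸ zero_le_one
  have hxz : ∀ v, z v = 0 ↔ x v = 0 := fun v => not_iff_not.1 (hsupp v).symm
  have hμ₀ : ∀ v, ipaMu B s 0 v = z v ↔ ipaMu A y 0 v = x v := fun v =>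
    eq_comm.trans ((hxz v).trans eq_comm)
  intro ℓ
  induction ℓ with
  | zero =>
    refine fun v => ⟨(hμ₀ v).symm, ?_⟩
    rw [ipaM_zero_eq_self_iff hA hcol hx hy, ipaM_zero_eq_self_iff hBnonneg hcolB hz₀ hs]
    simp only [ne_eq, hBA, hμ₀]
  | succ ℓ ih =>
    intro v
    rw [ipaMu_succ_eq_self_iff hA hcol hx hy, ipaMu_succ_eq_self_iff hBnonneg hcolB hz₀ hs,
      ipaM_succ_eq_self_iff hA hcol hx hy, ipaM_succ_eq_self_iff hBnonneg hcolB hz₀ hs]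
    simp only [ne_eq, hBA, hxz, fun v => (ih v).1.symm, fun v => (ih v).2.symm, and_self]
end

section
/- Let A ∈ {0,1}^{m×n} be a binary measurement matrix with no all-zero column. A subset T of the variable nodes V is a termatiko set of A if and only if T satisfies the termatiko condition, i.e., with N = N(T) and S = {v ∈ V∖T : N(v) ⊆ N}, for every c ∈ N either (i) N(c) ∩ S ≠ ∅, or (ii) |{v ∈ N_T(c) : every c' ∈ N(v) satisfies |N_T(c')| ≥ 2}| ≥ 2. -/
open scoped Classical
open Finset

variable {C V : Type*} [Fintype C] [Fintype V]

/-!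
For binary `A` and `y = A·1_T` we have `y_c = |N_T(c)|` and `M⁽⁰⁾_v = min_{c ∈ N(v)} |N_T(c)|`.
Since `μ⁽⁰⁾ = 0` forces `M⁽¹⁾ = M⁽⁰⁾`, the IPA is stationary as soon as `μ⁽¹⁾ = 0`, so `T` is
termatiko iff `|N_T(c)| ≤ ∑_{v' ∈ N(c) ∖ {v}} M⁽⁰⁾_{v'}` on every edge `(c, v)`.
Now `M⁽⁰⁾ ≥ 1` on `T ∪ S`, `M⁽⁰⁾ = 0` off `T ∪ S`, `M⁽⁰⁾ ≥ 2` on the nodes counted in (ii) and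
`M⁽⁰⁾ ≤ 1` on the other nodes of `T`. So (i) or (ii) at `c` makes up for the excluded `v` with an
extra unit, while if both fail, excluding the node counted in (ii) (if there is one) leaves a
right-hand side of at most `|N_T(c)| - 1`.
-/

section FiniteFamily

variable {ι : Type*} {p : ι → Prop} {f : ι → ℝ}

theorem sInf_setOf_le [Finite ι] {i : ι} (hi : p i) : sInf {r | ∃ i, p i ∧ r = f i} ≤ f i :=
  csInf_le ((Set.finite_range f).subset (by rintro _ ⟨j, -, rfl⟩; exact ⟨j, rfl⟩)).bddBelow
    ⟨i, hi, rfl⟩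

theorem le_sInf_setOf {b : ℝ} {i : ι} (hi : p i) (h : ∀ j, p j → b ≤ f j) :
    b ≤ sInf {r | ∃ i, p i ∧ r = f i} :=
  le_csInf ⟨f i, i, hi, rfl⟩ (by rintro _ ⟨j, hj, rfl⟩; exact h j hj)

theorem sSup_setOf_max_zero_eq_zero_iff [Finite ι] :
    sSup {r | ∃ i, p i ∧ r = max 0 (f i)} = 0 ↔ ∀ i, p i → f i ≤ 0 := by
  constructor
  · intro h i hi
    have hbdd : BddAbove {r | ∃ i, p i ∧ r = max 0 (f i)} :=
      ((Set.finite_range fun j => max 0 (f j)).subset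
        (by rintro _ ⟨j, -, rfl⟩; exact ⟨j, rfl⟩)).bddAbove
    calc f i ≤ max 0 (f i) := le_max_right _ _
      _ ≤ 0 := (le_csSup hbdd ⟨i, hi, rfl⟩).trans h.le
  · intro h
    refine le_antisymm (Real.sSup_nonpos ?_) (Real.sSup_nonneg ?_)
    · rintro _ ⟨i, hi, rfl⟩
      exact (max_eq_left (h i hi)).le
    · rintro _ ⟨i, -, rfl⟩
      exact le_max_left _ _

end FiniteFamily

omit [Fintype C] [Fintype V] in
theorem Binary.eq_one {A : C → V → ℝ} (hbin : Binary A) {c : C} {v : V} (h : A c v ≠ 0) :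
    A c v = 1 :=
  (hbin c v).resolve_left h

section IPA

omit [Fintype C]

variable {A : C → V → ℝ} {y : C → ℝ}

theorem ipa_succ_congr {k ℓ : ℕ} (h : ipa A y k = ipa A y ℓ) :
    ipa A y (k + 1) = ipa A y (ℓ + 1) := by
  rw [ipa.eq_2, ipa.eq_2, h]

theorem ipaM_one : (ipa A y 1).2 = (ipa A y 0).2 := by
  funext v
  simp [ipa]

theorem forall_ipaMu_eq_zero_iff :
    (∀ ℓ v, ipaMu A y ℓ v = 0) ↔ ∀ v, ipaMu A y 1 v = 0 := by
  refine ⟨fun h => h 1, fun h => ?_⟩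
  have hfix : ipa A y 1 = ipa A y 0 := Prod.ext (funext h) ipaM_one
  have hconst : ∀ ℓ, ipa A y ℓ = ipa A y 0 := fun ℓ => by
    induction ℓ with
    | zero => rfl
    | succ ℓ ih => exact (ipa_succ_congr ih).trans hfix
  intro ℓ v
  simp only [ipaMu, hconst ℓ]
  rfl

theorem sum_filter_ne_eq_sum_Nc_erase (hbin : Binary A) (c : C) (v : V) (g : V → ℝ) :
    ∑ v' ∈ univ.filter (fun v' => v' ≠ v), A c v' * g v' =
      ∑ v' ∈ (Nc A c).erase v, g v' := by
  have hset : (Nc A c).erase v =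
      (univ.filter fun v' => v' ≠ v).filter fun v' => A c v' ≠ 0 := by
    ext v'
    simp [Nc]
  rw [hset, sum_filter (fun v' => A c v' ≠ 0)]
  refine sum_congr rfl fun v' _ => ?_
  rcases hbin c v' with h | h <;> simp [h]

theorem ipaMu_one_eq_zero_iff [Finite C] (hbin : Binary A) (v : V) :
    ipaMu A y 1 v = 0 ↔
      ∀ c, A c v ≠ 0 → y c ≤ ∑ v' ∈ (Nc A c).erase v, ipaM A y 0 v' := by
  rw [ipaMu, ipa, sSup_setOf_max_zero_eq_zero_iff]
  refine forall_congr' fun c => imp_congr_right fun hc => ?_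
  rw [hbin.eq_one hc, div_one, sub_nonpos, sum_filter_ne_eq_sum_Nc_erase hbin]
  rfl

theorem ipaM_zero_le [Finite C] (hbin : Binary A) {c : C} {v : V} (hc : A c v ≠ 0) :
    ipaM A y 0 v ≤ y c := by
  simpa [ipaM, ipa, hbin.eq_one hc] using
    sInf_setOf_le (p := fun c => A c v ≠ 0) (f := fun c => y c / A c v) hc

theorem le_ipaM_zero (hbin : Binary A) {b : ℝ} {c : C} {v : V} (hc : A c v ≠ 0)
    (h : ∀ c', A c' v ≠ 0 → b ≤ y c') : b ≤ ipaM A y 0 v :=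
  le_sInf_setOf (p := fun c => A c v ≠ 0) (f := fun c => y c / A c v) hc fun c' hc' => by
    simpa [hbin.eq_one hc'] using h c' hc'

end IPA

section TannerGraph

variable {A : C → V → ℝ} {T : Finset V}

omit [Fintype C] [Fintype V] in
theorem mem_NTc {c : C} {v : V} : v ∈ NTc A T c ↔ v ∈ T ∧ A c v ≠ 0 :=
  mem_filter

omit [Fintype C] in
theorem NTc_subset_Nc (c : C) : NTc A T c ⊆ Nc A c := fun v hv => by
  simpa [Nc] using (mem_NTc.1 hv).2

omit [Fintype V] in
theorem mem_NT_iff_nonempty {c : C} : c ∈ NT A T ↔ (NTc A T c).Nonempty := by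
  simp [NT, Finset.Nonempty, mem_NTc]

theorem mem_Sset {v : V} : v ∈ Sset A T ↔ v ∉ T ∧ ∀ c, A c v ≠ 0 → c ∈ NT A T := by
  simp [Sset]

omit [Fintype C] in
theorem measT_eq_card (hbin : Binary A) (T : Finset V) (c : C) :
    measT A T c = #(NTc A T c) := by
  calc measT A T c = ∑ v, if v ∈ NTc A T c then 1 else 0 :=
        sum_congr rfl fun v _ => by rcases hbin c v with h | h <;> simp [indVec, mem_NTc, h]
    _ = #(NTc A T c) := by simp

omit [Fintype C] in
theorem ipaM_zero_nonneg (hbin : Binary A) (T : Finset V) (v : V) :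
    0 ≤ ipaM A (measT A T) 0 v :=
  Real.sInf_nonneg <| by
    rintro _ ⟨c, hc, rfl⟩
    rw [hbin.eq_one hc, div_one, measT_eq_card hbin]
    positivity

theorem ipaM_zero_le_card (hbin : Binary A) {c : C} {v : V} (hc : A c v ≠ 0) :
    ipaM A (measT A T) 0 v ≤ #(NTc A T c) :=
  measT_eq_card hbin T c ▸ ipaM_zero_le hbin hc

omit [Fintype C] in
theorem le_ipaM_zero_of_le_card (hbin : Binary A) {k : ℕ} {c : C} {v : V} (hc : A c v ≠ 0)
    (hv : ∀ c', A c' v ≠ 0 → k ≤ #(NTc A T c')) : (k : ℝ) ≤ ipaM A (measT A T) 0 v :=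
  le_ipaM_zero hbin hc fun c' hc' => by
    rw [measT_eq_card hbin]
    exact_mod_cast hv c' hc'

theorem one_le_ipaM_zero (hbin : Binary A) {c : C} {v : V} (hc : A c v ≠ 0)
    (hv : ∀ c', A c' v ≠ 0 → c' ∈ NT A T) : 1 ≤ ipaM A (measT A T) 0 v := by
  exact_mod_cast le_ipaM_zero_of_le_card hbin hc fun c' hc' =>
    (mem_NT_iff_nonempty.1 (hv c' hc')).card_pos

theorem one_le_ipaM_zero_of_mem (hbin : Binary A) {c : C} {v : V} (hv : v ∈ NTc A T c) :
    1 ≤ ipaM A (measT A T) 0 v :=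
  one_le_ipaM_zero hbin (mem_NTc.1 hv).2 fun _ hc' =>
    mem_NT_iff_nonempty.2 ⟨v, mem_NTc.2 ⟨(mem_NTc.1 hv).1, hc'⟩⟩

theorem ipaM_zero_eq_zero (hbin : Binary A) {v : V} (hvT : v ∉ T) (hvS : v ∉ Sset A T) :
    ipaM A (measT A T) 0 v = 0 := by
  obtain ⟨c', hc', hc'N⟩ : ∃ c', A c' v ≠ 0 ∧ c' ∉ NT A T := by
    by_contra! h
    exact hvS (mem_Sset.2 ⟨hvT, h⟩)
  refine le_antisymm ?_ (ipaM_zero_nonneg hbin T v)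
  simpa [not_nonempty_iff_eq_empty.1 (mem_NT_iff_nonempty.not.1 hc'N)] using
    ipaM_zero_le_card hbin (T := T) hc'

theorem card_NTc_le_sum_ipaM_zero (hbin : Binary A) (hcond : TermatikoCond A T)
    (c : C) (v : V) :
    (#(NTc A T c) : ℝ) ≤ ∑ v' ∈ (Nc A c).erase v, ipaM A (measT A T) 0 v' := by
  have le_sum_of_subset : ∀ F ⊆ (Nc A c).erase v, ∑ v' ∈ F, ipaM A (measT A T) 0 v' ≤
      ∑ v' ∈ (Nc A c).erase v, ipaM A (measT A T) 0 v' := fun F hF =>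
    sum_le_sum_of_subset_of_nonneg hF fun v' _ _ => ipaM_zero_nonneg hbin T v'
  by_cases hcN : c ∈ NT A T
  swap
  · rw [not_nonempty_iff_eq_empty.1 (mem_NT_iff_nonempty.not.1 hcN)]
    simpa using le_sum_of_subset ∅ (empty_subset _)
  rcases hcond c hcN with ⟨w, hwS, hwc⟩ | hdeep
  · set F := (insert w (NTc A T c)).erase v
    have hwT : w ∉ NTc A T c := fun h => (mem_Sset.1 hwS).1 (mem_NTc.1 h).1
    have hcard : #(NTc A T c) ≤ #F := by
      have : #(insert w (NTc A T c)) - 1 ≤ #F := pred_card_le_card_erase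
      rw [card_insert_of_notMem hwT] at this
      omega
    have hF : ∀ x ∈ F, 1 ≤ ipaM A (measT A T) 0 x := by
      intro x hx
      rcases mem_insert.1 (mem_of_mem_erase hx) with rfl | hxT
      · exact one_le_ipaM_zero hbin hwc (mem_Sset.1 hwS).2
      · exact one_le_ipaM_zero_of_mem hbin hxT
    calc (#(NTc A T c) : ℝ) ≤ #F := by exact_mod_cast hcard
      _ ≤ ∑ v' ∈ F, ipaM A (measT A T) 0 v' := by simpa using card_nsmul_le_sum F _ 1 hF
      _ ≤ _ := le_sum_of_subset F <| erase_subset_erase _ <|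
          insert_subset (by simpa [Nc] using hwc) (NTc_subset_Nc c)
  · obtain ⟨w, hwK, hwv⟩ := exists_mem_ne hdeep v
    obtain ⟨hwN, hwdeep⟩ := mem_filter.1 hwK
    set F := (NTc A T c).erase v
    have hwF : w ∈ F := mem_erase.2 ⟨hwv, hwN⟩
    have hcard : #(NTc A T c) ≤ 2 + #(F.erase w) := by
      have : #(NTc A T c) - 1 ≤ #F := pred_card_le_card_erase
      have := card_erase_of_mem hwF
      have := card_pos.2 ⟨w, hwF⟩
      omega
    have hF : ∀ x ∈ F.erase w, 1 ≤ ipaM A (measT A T) 0 x := fun x hx =>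
      one_le_ipaM_zero_of_mem hbin (mem_of_mem_erase (mem_of_mem_erase hx))
    calc (#(NTc A T c) : ℝ) ≤ 2 + #(F.erase w) := by exact_mod_cast hcard
      _ ≤ ipaM A (measT A T) 0 w + ∑ v' ∈ F.erase w, ipaM A (measT A T) 0 v' := by
          gcongr
          · exact_mod_cast le_ipaM_zero_of_le_card hbin (mem_NTc.1 hwN).2 hwdeep
          · simpa using card_nsmul_le_sum _ _ 1 hF
      _ = ∑ v' ∈ F, ipaM A (measT A T) 0 v' := add_sum_erase F _ hwF
      _ ≤ _ := le_sum_of_subset F (erase_subset_erase _ (NTc_subset_Nc c))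

theorem termatikoCond_of_card_NTc_le_sum_ipaM_zero (hbin : Binary A)
    (h : ∀ c v, A c v ≠ 0 →
      (#(NTc A T c) : ℝ) ≤ ∑ v' ∈ (Nc A c).erase v, ipaM A (measT A T) 0 v') :
    TermatikoCond A T := by
  intro c hcN
  by_contra! hcon
  obtain ⟨hS, hK⟩ := hcon
  obtain ⟨v, hvN, hdeep⟩ : ∃ v ∈ NTc A T c, ∀ x ∈ NTc A T c, x ≠ v →
      ∃ c', A c' x ≠ 0 ∧ #(NTc A T c') < 2 := by
    rcases ((NTc A T c).filter fun x => ∀ c', A c' x ≠ 0 → 2 ≤ #(NTc A T c'))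
      |>.eq_empty_or_nonempty with hKe | ⟨w, hw⟩
    · obtain ⟨u, hu⟩ := mem_NT_iff_nonempty.1 hcN
      refine ⟨u, hu, fun x hx _ => ?_⟩
      by_contra! hx'
      exact eq_empty_iff_forall_notMem.1 hKe x (mem_filter.2 ⟨hx, hx'⟩)
    · refine ⟨w, (mem_filter.1 hw).1, fun x hx hxw => ?_⟩
      by_contra! hx'
      exact hxw (card_le_one.1 (by omega) x (mem_filter.2 ⟨hx, hx'⟩) w hw)
  have hzero : ∀ x ∈ (Nc A c).erase v, x ∉ (NTc A T c).erase v →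
      ipaM A (measT A T) 0 x = 0 := by
    intro x hx hxN
    have hxc : A c x ≠ 0 := by simpa [Nc] using mem_of_mem_erase hx
    refine ipaM_zero_eq_zero hbin (fun hxT => hxN ?_) fun hxS => hxc (hS x hxS)
    exact mem_erase.2 ⟨ne_of_mem_erase hx, mem_NTc.2 ⟨hxT, hxc⟩⟩
  have hle_one : ∀ x ∈ (NTc A T c).erase v, ipaM A (measT A T) 0 x ≤ 1 := by
    intro x hx
    obtain ⟨c', hc', hlt⟩ := hdeep x (mem_of_mem_erase hx) (ne_of_mem_erase hx)
    exact (ipaM_zero_le_card hbin hc').trans (by exact_mod_cast Nat.lt_succ_iff.1 hlt)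
  have hsum := h c v (mem_NTc.1 hvN).2
  rw [← sum_subset (erase_subset_erase _ (NTc_subset_Nc c)) hzero] at hsum
  have hcard := (sum_le_card_nsmul _ _ 1 hle_one).trans' hsum
  rw [card_erase_of_mem hvN, nsmul_one, Nat.cast_sub (card_pos.2 ⟨v, hvN⟩)] at hcard
  norm_num at hcard

end TannerGraph

theorem termatiko_iff_cond_general {m n : ℕ} (A : Fin m → Fin n → ℝ)
    (hbin : Binary A) (T : Finset (Fin n)) :
    IsTermatiko A T ↔ TermatikoCond A T := by
  rw [IsTermatiko, forall_ipaMu_eq_zero_iff]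
  simp only [ipaMu_one_eq_zero_iff hbin, measT_eq_card hbin]
  exact ⟨fun h => termatikoCond_of_card_NTc_le_sum_ipaM_zero hbin fun c v hv => h v c hv,
    fun hcond v c _ => card_NTc_le_sum_ipaM_zero hbin hcond c v⟩

/-- graph-theoretic characterization of termatiko sets:
`T` is a termatiko set of a binary measurement matrix `A` iff it satisfies
the termatiko condition. -/
theorem termatiko_iff_cond {m n : ℕ} (A : Fin m → Fin n → ℝ)
    (hbin : Binary A) (hcol : NoZeroCol A) (T : Finset (Fin n)) :
    IsTermatiko A T ↔ TermatikoCond A T :=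
  termatiko_iff_cond_general A hbin T
end

section
/- Let A ∈ {0,1}^{m×n} be a binary measurement matrix with no all-zero column, let x ∈ ℝ^n_{≥0}, and let y = Ax. The IPA fails to fully recover x — i.e., for every iteration ℓ ≥ 0 there exists a variable node v with μ^{(ℓ)}_v ≠ x_v — if and only if supp(x) contains a nonempty termatiko set of A. -/
open scoped Classical
open Finset

variable {C V : Type*} [Fintype C] [Fintype V]

/-!
Each IPA update is antitone in the bounds it is fed, the IPA is positively homogeneous in `y`, and
replacing `y` by `A x' + y` with `x' ≥ 0` raises the upper bounds by at least `x'` and the lower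
bounds by at most `x'`.

If `T ⊆ supp x` is termatiko and `ε = min_T x`, then `A x = A (x - ε 1_T) + ε A 1_T`, so
`μ^{(ℓ)} ≤ x - ε 1_T + ε μ^{(ℓ)}(A 1_T) = x - ε 1_T` for every `ℓ`.

Conversely, the sets `T_ℓ = {v : μ^{(ℓ)}_v < x_v}` decrease, so `T_{L+2} = T_L =: T` for some `L`.
With `x - μ^{(L)} ≤ Λ 1_T` one gets `M^{(L+1)} ≤ x - Λ 1_T + Λ M^{(0)}(A 1_T)`, and since the nodes
of `T` are still unrecovered at step `L + 2`, every message `μ^{(1)}_{c→v}` of the IPA run on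
`A 1_T` is below `1` before truncation at `0`. For a binary matrix these are integers, hence `≤ 0`:
so `μ^{(1)}(A 1_T) = 0 = μ^{(0)}(A 1_T)`, the run on `A 1_T` is stationary, and `T` is termatiko.
-/

open Matrix

set_option linter.unusedSectionVars false

section Messages

variable {A : C → V → ℝ}

noncomputable def rowSumExcept (A : C → V → ℝ) (g : V → ℝ) (c : C) (v : V) : ℝ :=
  ∑ v' ∈ univ.filter (fun v' => v' ≠ v), A c v' * g v'

/-- `(y_c − Σ_{v' ≠ v} a_{cv'} g_{v'}) / a_{cv}`: for `g = μ^{(ℓ)}` this is `M^{(ℓ+1)}_{c→v}`,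
and `μ^{(ℓ+1)}_{c→v}` is its positive part for `g = M^{(ℓ)}`. -/
noncomputable def ipaMsg (A : C → V → ℝ) (y : C → ℝ) (g : V → ℝ) (c : C) (v : V) : ℝ :=
  (y c - rowSumExcept A g c v) / A c v

lemma sum_mul_eq_add_rowSumExcept (g : V → ℝ) (c : C) (v : V) :
    ∑ v', A c v' * g v' = A c v * g v + rowSumExcept A g c v := by
  rw [rowSumExcept, filter_ne' univ v, add_sum_erase univ (fun v' => A c v' * g v') (mem_univ v)]

lemma rowSumExcept_zero (c : C) (v : V) : rowSumExcept A 0 c v = 0 := by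
  simp [rowSumExcept]

lemma rowSumExcept_add (g h : V → ℝ) (c : C) (v : V) :
    rowSumExcept A (g + h) c v = rowSumExcept A g c v + rowSumExcept A h c v := by
  simp [rowSumExcept, mul_add, sum_add_distrib]

lemma rowSumExcept_smul (ε : ℝ) (g : V → ℝ) (c : C) (v : V) :
    rowSumExcept A (ε • g) c v = ε * rowSumExcept A g c v := by
  simp [rowSumExcept, mul_sum, mul_left_comm]

lemma rowSumExcept_mono (hA : MatNonneg A) (c : C) (v : V) :
    Monotone fun g => rowSumExcept A g c v :=
  fun _ _ hgh => sum_le_sum fun v' _ => mul_le_mul_of_nonneg_left (hgh v') (hA c v')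

lemma ipaMsg_antitone (hA : MatNonneg A) {c : C} {v : V} (y : C → ℝ) :
    Antitone fun g => ipaMsg A y g c v :=
  fun _ _ hgh => div_le_div_of_nonneg_right (sub_le_sub_left (rowSumExcept_mono hA c v hgh) _)
    (hA c v)

lemma ipaMsg_smul (ε : ℝ) (y : C → ℝ) (g : V → ℝ) (c : C) (v : V) :
    ipaMsg A (ε • y) (ε • g) c v = ε * ipaMsg A y g c v := by
  simp only [ipaMsg, rowSumExcept_smul, Pi.smul_apply, smul_eq_mul]
  ring

lemma ipaMsg_mulVec_add {c : C} {v : V} (hcv : A c v ≠ 0) (x g : V → ℝ) (w : C → ℝ) :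
    ipaMsg A (A *ᵥ x + w) (x + g) c v = x v + ipaMsg A w g c v := by
  simp only [ipaMsg, Pi.add_apply, Matrix.mulVec, dotProduct, sum_mul_eq_add_rowSumExcept x c v,
    rowSumExcept_add]
  field_simp
  ring

lemma ipaMsg_mulVec_self {c : C} {v : V} (hcv : A c v ≠ 0) (x : V → ℝ) :
    ipaMsg A (A *ᵥ x) x c v = x v := by
  simpa [ipaMsg, rowSumExcept_zero] using ipaMsg_mulVec_add hcv x 0 0

end Messages

section Updates

variable {A : C → V → ℝ}

noncomputable def ipaUpper (A : C → V → ℝ) (y : C → ℝ) (μ : V → ℝ) (v : V) : ℝ :=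
  sInf {r : ℝ | ∃ c, A c v ≠ 0 ∧ r = ipaMsg A y μ c v}

noncomputable def ipaLower (A : C → V → ℝ) (y : C → ℝ) (M : V → ℝ) (v : V) : ℝ :=
  sSup {r : ℝ | ∃ c, A c v ≠ 0 ∧ r = max 0 (ipaMsg A y M c v)}

lemma Nv_nonempty (hcol : NoZeroCol A) (v : V) : (Nv A v).Nonempty :=
  let ⟨c, hc⟩ := hcol v
  ⟨c, by simpa [Nv] using hc⟩

lemma setOf_exists_ne_zero_eq_image (f : C → ℝ) (v : V) :
    {r : ℝ | ∃ c, A c v ≠ 0 ∧ r = f c} = f '' (Nv A v) := by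
  ext r
  simp [Nv, eq_comm]

variable (hcol : NoZeroCol A) (y : C → ℝ)
include hcol

lemma ipaUpper_eq_inf' (μ : V → ℝ) (v : V) :
    ipaUpper A y μ v = (Nv A v).inf' (Nv_nonempty hcol v) (ipaMsg A y μ · v) := by
  rw [inf'_eq_csInf_image, ipaUpper, setOf_exists_ne_zero_eq_image]

lemma ipaLower_eq_sup' (M : V → ℝ) (v : V) :
    ipaLower A y M v = (Nv A v).sup' (Nv_nonempty hcol v) (max 0 <| ipaMsg A y M · v) := by
  rw [sup'_eq_csSup_image, ipaLower, setOf_exists_ne_zero_eq_image]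

lemma ipaUpper_antitone (hA : MatNonneg A) : Antitone (ipaUpper A y) := fun _ _ h v => by
  simp only [ipaUpper_eq_inf' hcol]
  exact inf'_mono_fun fun c _ => ipaMsg_antitone hA y h

lemma ipaLower_antitone (hA : MatNonneg A) : Antitone (ipaLower A y) := fun _ _ h v => by
  simp only [ipaLower_eq_sup' hcol]
  exact sup'_mono_fun fun c _ => max_le_max_left 0 (ipaMsg_antitone hA y h)

lemma ipaMsg_le_ipaLower (M : V → ℝ) {c : C} {v : V} (hcv : A c v ≠ 0) :
    ipaMsg A y M c v ≤ ipaLower A y M v := by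
  rw [ipaLower_eq_sup' hcol]
  exact (le_max_right _ _).trans (le_sup' (max 0 <| ipaMsg A y M · v) (by simpa [Nv] using hcv))

lemma ipaLower_nonneg (M : V → ℝ) : 0 ≤ ipaLower A y M := fun v => by
  rw [Pi.zero_apply, ipaLower_eq_sup' hcol]
  obtain ⟨c, hc⟩ := Nv_nonempty hcol v
  exact (le_max_left _ _).trans (le_sup' (max 0 <| ipaMsg A y M · v) hc)

lemma ipaLower_eq_zero {M : V → ℝ} {v : V} (h : ∀ c, A c v ≠ 0 → ipaMsg A y M c v ≤ 0) :
    ipaLower A y M v = 0 := by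
  refine le_antisymm ?_ (ipaLower_nonneg hcol y M v)
  rw [ipaLower_eq_sup' hcol]
  exact sup'_le _ _ fun c hc => max_le le_rfl (h c (by simpa [Nv] using hc))

lemma ipaUpper_smul {ε : ℝ} (hε : 0 ≤ ε) (μ : V → ℝ) :
    ipaUpper A (ε • y) (ε • μ) = ε • ipaUpper A y μ := funext fun v => by
  rw [Pi.smul_apply, smul_eq_mul, ipaUpper_eq_inf' hcol, ipaUpper_eq_inf' hcol,
    apply_inf'_eq_inf'_comp _ _ fun _ _ => (monotone_mul_left_of_nonneg hε).map_min]
  simp [ipaMsg_smul]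

lemma ipaLower_smul {ε : ℝ} (hε : 0 ≤ ε) (M : V → ℝ) :
    ipaLower A (ε • y) (ε • M) = ε • ipaLower A y M := funext fun v => by
  rw [Pi.smul_apply, smul_eq_mul, ipaLower_eq_sup' hcol, ipaLower_eq_sup' hcol,
    apply_sup'_eq_sup'_comp _ _ fun _ _ => (monotone_mul_left_of_nonneg hε).map_max]
  simp [ipaMsg_smul, mul_max_of_nonneg _ _ hε]

lemma ipaUpper_mulVec_add (x μ : V → ℝ) (w : C → ℝ) :
    ipaUpper A (A *ᵥ x + w) (x + μ) = x + ipaUpper A w μ := funext fun v => by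
  rw [Pi.add_apply, ipaUpper_eq_inf' hcol, ipaUpper_eq_inf' hcol,
    apply_inf'_eq_inf'_comp _ _ fun _ _ => (monotone_id.const_add (x v)).map_min]
  exact inf'_congr _ rfl fun c hc => ipaMsg_mulVec_add (by simpa [Nv] using hc) x μ w

lemma ipaLower_mulVec_add_le {x : V → ℝ} (hx : 0 ≤ x) (M : V → ℝ) (w : C → ℝ) :
    ipaLower A (A *ᵥ x + w) (x + M) ≤ x + ipaLower A w M := fun v => by
  rw [Pi.add_apply, ipaLower_eq_sup' hcol, ipaLower_eq_sup' hcol,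
    apply_sup'_eq_sup'_comp _ _ fun _ _ => (monotone_id.const_add (x v)).map_max]
  refine sup'_mono_fun fun c hc => ?_
  rw [ipaMsg_mulVec_add (by simpa [Nv] using hc), Function.comp_apply]
  exact max_le (add_nonneg (hx v) (le_max_left _ _)) (add_le_add_right (le_max_right _ _) _)

end Updates

section Iteration

variable {A : C → V → ℝ} {y : C → ℝ}

lemma ipaMu_zero : ipaMu A y 0 = 0 := rfl

lemma ipaM_zero_s11 : ipaM A y 0 = ipaUpper A y 0 := funext fun v => by
  simp [ipaM, ipa, ipaUpper, ipaMsg, rowSumExcept_zero]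

lemma ipaMu_succ_s11 (ℓ : ℕ) : ipaMu A y (ℓ + 1) = ipaLower A y (ipaM A y ℓ) := rfl

lemma ipaM_succ_s11 (ℓ : ℕ) : ipaM A y (ℓ + 1) = ipaUpper A y (ipaMu A y ℓ) := rfl

lemma ipaMu_eq_zero_of_ipaMu_one_eq_zero (h : ipaMu A y 1 = 0) (ℓ : ℕ) : ipaMu A y ℓ = 0 := by
  suffices ∀ ℓ, ipaMu A y ℓ = 0 ∧ ipaM A y ℓ = ipaM A y 0 from (this ℓ).1
  intro ℓ
  induction ℓ with
  | zero => exact ⟨rfl, rfl⟩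
  | succ ℓ ih =>
    refine ⟨?_, ?_⟩
    · rw [ipaMu_succ_s11, ih.2, ← ipaMu_succ_s11, h]
    · rw [ipaM_succ_s11, ih.1, ipaM_zero_s11]

variable (hcol : NoZeroCol A)
include hcol

lemma ipaMu_nonneg : ∀ ℓ, 0 ≤ ipaMu A y ℓ
  | 0 => le_rfl
  | _ + 1 => ipaLower_nonneg hcol y _

lemma ipa_smul {ε : ℝ} (hε : 0 ≤ ε) (ℓ : ℕ) :
    ipaMu A (ε • y) ℓ = ε • ipaMu A y ℓ ∧ ipaM A (ε • y) ℓ = ε • ipaM A y ℓ := by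
  induction ℓ with
  | zero => simp [ipaMu_zero, ipaM_zero_s11, ← ipaUpper_smul hcol y hε]
  | succ ℓ ih =>
    rw [ipaMu_succ_s11, ipaM_succ_s11, ih.1, ih.2, ipaUpper_smul hcol y hε, ipaLower_smul hcol y hε]
    exact ⟨rfl, rfl⟩

lemma ipa_zero_measurement (ℓ : ℕ) : ipaMu A 0 ℓ = 0 ∧ ipaM A 0 ℓ = 0 := by
  simpa using ipa_smul hcol (y := 0) le_rfl ℓ

variable (hA : MatNonneg A)
include hA

lemma ipa_mulVec_add {x : V → ℝ} (hx : 0 ≤ x) (w : C → ℝ) (ℓ : ℕ) :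
    ipaMu A (A *ᵥ x + w) ℓ ≤ x + ipaMu A w ℓ ∧ x + ipaM A w ℓ ≤ ipaM A (A *ᵥ x + w) ℓ := by
  induction ℓ with
  | zero =>
    refine ⟨by simpa [ipaMu_zero] using hx, ?_⟩
    rw [ipaM_zero_s11, ipaM_zero_s11, ← ipaUpper_mulVec_add hcol, add_zero]
    exact ipaUpper_antitone hcol _ hA hx
  | succ ℓ ih =>
    constructor
    · calc ipaMu A (A *ᵥ x + w) (ℓ + 1) ≤ ipaLower A (A *ᵥ x + w) (x + ipaM A w ℓ) :=
            ipaLower_antitone hcol _ hA ih.2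
        _ ≤ x + ipaMu A w (ℓ + 1) := ipaLower_mulVec_add_le hcol hx _ w
    · calc x + ipaM A w (ℓ + 1) = ipaUpper A (A *ᵥ x + w) (x + ipaMu A w ℓ) :=
            (ipaUpper_mulVec_add hcol x _ w).symm
        _ ≤ ipaM A (A *ᵥ x + w) (ℓ + 1) := ipaUpper_antitone hcol _ hA ih.1

lemma ipaMu_mulVec_le {x : V → ℝ} (hx : 0 ≤ x) (ℓ : ℕ) : ipaMu A (A *ᵥ x) ℓ ≤ x := by
  simpa [(ipa_zero_measurement hcol ℓ).1] using (ipa_mulVec_add hcol hA hx 0 ℓ).1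

lemma le_ipaM_mulVec {x : V → ℝ} (hx : 0 ≤ x) (ℓ : ℕ) : x ≤ ipaM A (A *ᵥ x) ℓ := by
  simpa [(ipa_zero_measurement hcol ℓ).2] using (ipa_mulVec_add hcol hA hx 0 ℓ).2

lemma ipaMu_monotone : Monotone (ipaMu A y) := by
  suffices ∀ ℓ, ipaMu A y ℓ ≤ ipaMu A y (ℓ + 1) ∧ ipaM A y (ℓ + 1) ≤ ipaM A y ℓ from
    monotone_nat_of_le_succ fun ℓ => (this ℓ).1
  intro ℓ
  induction ℓ with
  | zero => exact ⟨ipaMu_nonneg hcol 1, (ipaM_zero_s11 (y := y)).ge⟩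
  | succ ℓ ih => exact ⟨ipaLower_antitone hcol y hA ih.2, ipaUpper_antitone hcol y hA ih.1⟩

end Iteration

section Termatiko

variable {A : C → V → ℝ} {T : Finset V}

lemma mulVec_eq_sub_smul_indVec_add_measT (x : V → ℝ) (Λ : ℝ) (T : Finset V) :
    A *ᵥ x = A *ᵥ (x - Λ • indVec T) + Λ • measT A T := by
  ext c
  simp [measT, Matrix.mulVec, dotProduct, mul_sub, mul_sum, mul_left_comm]

lemma indVec_nonneg (T : Finset V) : 0 ≤ indVec T := fun v => by
  unfold indVec
  split_ifs <;> norm_num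

lemma isTermatiko_of_ipaMsg_nonpos (hcol : NoZeroCol A)
    (h : ∀ v c, A c v ≠ 0 → ipaMsg A (measT A T) (ipaM A (measT A T) 0) c v ≤ 0) :
    IsTermatiko A T := fun ℓ v => by
  refine congrFun (ipaMu_eq_zero_of_ipaMu_one_eq_zero (funext fun v => ?_) ℓ) v
  exact ipaLower_eq_zero hcol _ (h v)

lemma ipaMu_lt_of_isTermatiko (hA : MatNonneg A) (hcol : NoZeroCol A) {x : V → ℝ} (hx : 0 ≤ x)
    (hT : IsTermatiko A T) (hsupp : ∀ v ∈ T, x v ≠ 0) {v : V} (hv : v ∈ T) (ℓ : ℕ) :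
    ipaMu A (A *ᵥ x) ℓ v < x v := by
  set ε := T.inf' ⟨v, hv⟩ x
  have hε : 0 < ε := (lt_inf'_iff _).2 fun v hv => (hx v).lt_of_ne' (hsupp v hv)
  set x₀ := x - ε • indVec T
  have hx₀ : 0 ≤ x₀ := fun u => by
    by_cases hu : u ∈ T
    · simpa [x₀, indVec, hu] using inf'_le x hu
    · simpa [x₀, indVec, hu] using hx u
  calc ipaMu A (A *ᵥ x) ℓ v ≤ x₀ v + ipaMu A (ε • measT A T) ℓ v := by
        rw [mulVec_eq_sub_smul_indVec_add_measT x ε T]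
        exact (ipa_mulVec_add hcol hA hx₀ _ ℓ).1 v
    _ = x v - ε := by simp [(ipa_smul hcol hε.le ℓ).1, hT ℓ v, x₀, indVec, hv]
    _ < x v := sub_lt_self _ hε

lemma ipaM_succ_le_of_sub_smul_indVec_le (hA : MatNonneg A) (hcol : NoZeroCol A) {x : V → ℝ}
    {ℓ : ℕ} {Λ : ℝ} (hΛ : 0 ≤ Λ) (hlow : x - Λ • indVec T ≤ ipaMu A (A *ᵥ x) ℓ) :
    ipaM A (A *ᵥ x) (ℓ + 1) ≤ x - Λ • indVec T + Λ • ipaM A (measT A T) 0 := calc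
  ipaM A (A *ᵥ x) (ℓ + 1) = ipaUpper A (A *ᵥ x) (ipaMu A (A *ᵥ x) ℓ) := ipaM_succ_s11 ℓ
  _ ≤ ipaUpper A (A *ᵥ x) (x - Λ • indVec T + Λ • 0) :=
      ipaUpper_antitone hcol _ hA (by rwa [smul_zero, add_zero])
  _ = x - Λ • indVec T + Λ • ipaM A (measT A T) 0 := by
      rw [mulVec_eq_sub_smul_indVec_add_measT x Λ T, ipaUpper_mulVec_add hcol,
        ipaUpper_smul hcol _ hΛ, ipaM_zero_s11]

end Termatiko

section Integrality

variable {A : C → V → ℝ} (hbin : Binary A)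
include hbin

lemma Binary.matNonneg : MatNonneg A := fun c v => by
  rcases hbin c v with h | h <;> simp [h]

-- `(⊥ : Subring ℝ)` is the image of `ℤ` in `ℝ`.
lemma Binary.mem_bot (c : C) (v : V) : A c v ∈ (⊥ : Subring ℝ) := by
  rcases hbin c v with h | h <;> simp [h, zero_mem, one_mem]

lemma measT_mem_bot (T : Finset V) (c : C) : measT A T c ∈ (⊥ : Subring ℝ) :=
  Subring.sum_mem _ fun v _ => Subring.mul_mem _ (hbin.mem_bot c v) <| by
    unfold indVec
    split_ifs <;> simp [zero_mem, one_mem]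

lemma ipaMsg_mem_bot {y : C → ℝ} {g : V → ℝ} (hy : ∀ c, y c ∈ (⊥ : Subring ℝ))
    (hg : ∀ v, g v ∈ (⊥ : Subring ℝ)) {c : C} {v : V} (hcv : A c v ≠ 0) :
    ipaMsg A y g c v ∈ (⊥ : Subring ℝ) := by
  rw [ipaMsg, (hbin c v).resolve_left hcv, div_one]
  exact Subring.sub_mem _ (hy c) <|
    Subring.sum_mem _ fun v' _ => Subring.mul_mem _ (hbin.mem_bot c v') (hg v')

lemma ipaUpper_mem_bot (hcol : NoZeroCol A) {y : C → ℝ} {μ : V → ℝ}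
    (hy : ∀ c, y c ∈ (⊥ : Subring ℝ)) (hμ : ∀ v, μ v ∈ (⊥ : Subring ℝ)) (v : V) :
    ipaUpper A y μ v ∈ (⊥ : Subring ℝ) := by
  rw [ipaUpper_eq_inf' hcol]
  refine inf'_mem _ (fun a ha b hb => ?_) _ _ _ fun c hc =>
    ipaMsg_mem_bot hbin hy hμ (by simpa [Nv] using hc)
  rcases min_choice a b with h | h <;> simp only [h, ha, hb]

lemma ipaMsg_measT_nonpos_of_lt_one (hcol : NoZeroCol A) {T : Finset V} {c : C} {v : V}
    (hcv : A c v ≠ 0) (h : ipaMsg A (measT A T) (ipaM A (measT A T) 0) c v < 1) :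
    ipaMsg A (measT A T) (ipaM A (measT A T) 0) c v ≤ 0 := by
  have hM : ∀ v, ipaM A (measT A T) 0 v ∈ (⊥ : Subring ℝ) := by
    rw [ipaM_zero_s11]
    exact ipaUpper_mem_bot hbin hcol (measT_mem_bot hbin T) fun _ => zero_mem _
  obtain ⟨k, hk⟩ := Subring.mem_bot.1 (ipaMsg_mem_bot hbin (measT_mem_bot hbin T) hM hcv)
  rw [← hk] at h ⊢
  have : k < 1 := by exact_mod_cast h
  exact_mod_cast (by omega : k ≤ 0)

end Integrality

section Converse

variable {A : C → V → ℝ} (hbin : Binary A) (hcol : NoZeroCol A)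
include hbin hcol

lemma isTermatiko_of_sub_smul_indVec_le {x : V → ℝ} {T : Finset V} {ℓ : ℕ} {Λ : ℝ}
    (hΛ : 0 ≤ Λ) (hlow : x - Λ • indVec T ≤ ipaMu A (A *ᵥ x) ℓ)
    (hgap : ∀ v ∈ T, ipaMu A (A *ᵥ x) (ℓ + 2) v < x v) : IsTermatiko A T := by
  have hA := hbin.matNonneg
  have hM := ipaM_succ_le_of_sub_smul_indVec_le hA hcol hΛ hlow
  set z := measT A T
  set m := ipaM A z 0
  refine isTermatiko_of_ipaMsg_nonpos hcol fun v c hcv => ?_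
  by_cases hv : v ∈ T
  · refine ipaMsg_measT_nonpos_of_lt_one hbin hcol hcv ?_
    have : x v - Λ + Λ * ipaMsg A z m c v < x v := calc
      x v - Λ + Λ * ipaMsg A z m c v = ipaMsg A (A *ᵥ x) (x - Λ • indVec T + Λ • m) c v := by
          rw [mulVec_eq_sub_smul_indVec_add_measT x Λ T, ipaMsg_mulVec_add hcv, ipaMsg_smul]
          simp [z, indVec, hv]
      _ ≤ ipaMsg A (A *ᵥ x) (ipaM A (A *ᵥ x) (ℓ + 1)) c v := ipaMsg_antitone hA _ hM
      _ ≤ ipaMu A (A *ᵥ x) (ℓ + 2) v := ipaMsg_le_ipaLower hcol _ _ hcv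
      _ < x v := hgap v hv
    by_contra! h
    nlinarith
  · calc ipaMsg A z m c v ≤ ipaMsg A z (indVec T) c v :=
        ipaMsg_antitone hA _ (le_ipaM_mulVec hcol hA (indVec_nonneg T) 0)
      _ = 0 := (ipaMsg_mulVec_self hcv _).trans (if_neg hv)

theorem exists_isTermatiko_of_forall_ipaMu_ne {x : V → ℝ} (hx : 0 ≤ x)
    (hfail : ∀ ℓ, ∃ v, ipaMu A (A *ᵥ x) ℓ v ≠ x v) :
    ∃ T : Finset V, T.Nonempty ∧ IsTermatiko A T ∧ ∀ v ∈ T, x v ≠ 0 := by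
  have hA := hbin.matNonneg
  set μ := ipaMu A (A *ᵥ x)
  set Tl : ℕ → Finset V := fun ℓ => univ.filter fun v => μ ℓ v < x v
  have hmem : ∀ ℓ v, v ∈ Tl ℓ ↔ μ ℓ v < x v := by simp [Tl]
  have hTl : Antitone Tl := fun ℓ ℓ' h v => by
    simp only [hmem]
    exact (ipaMu_monotone hcol hA h v).trans_lt
  obtain ⟨L, hL⟩ := WellFoundedLT.antitone_chain_condition hTl
  refine ⟨Tl L, ?_, ?_, fun v hv => ?_⟩
  · obtain ⟨v, hv⟩ := hfail L
    exact ⟨v, (hmem L v).2 ((ipaMu_mulVec_le hcol hA hx L v).lt_of_ne hv)⟩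
  · refine isTermatiko_of_sub_smul_indVec_le hbin hcol (Λ := ∑ v, (x v - μ L v))
      (sum_nonneg fun v _ => sub_nonneg.2 (ipaMu_mulVec_le hcol hA hx L v)) (fun v => ?_)
      (fun v hv => (hmem _ v).1 (hL (L + 2) (by omega) ▸ hv))
    by_cases hv : v ∈ Tl L
    · have := single_le_sum (fun u _ => sub_nonneg.2 (ipaMu_mulVec_le hcol hA hx L u))
        (mem_univ v)
      show x v - _ * indVec (Tl L) v ≤ μ L v
      rw [indVec, if_pos hv, mul_one]
      linarith
    · have := (hmem L v).not.1 hv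
      show x v - _ * indVec (Tl L) v ≤ μ L v
      rw [indVec, if_neg hv, mul_zero, sub_zero]
      exact not_lt.1 this
  · exact ((ipaMu_nonneg hcol L v).trans_lt ((hmem L v).1 hv)).ne'

end Converse

/-- the IPA fails to fully recover `x` iff `supp(x)` contains a
nonempty termatiko set of `A`. -/
theorem ipa_fails_iff_termatiko {m n : ℕ} (A : Fin m → Fin n → ℝ)
    (hbin : Binary A) (hcol : NoZeroCol A)
    (x : Fin n → ℝ) (hx : ∀ v, 0 ≤ x v)
    (y : Fin m → ℝ) (hy : ∀ c, y c = ∑ v, A c v * x v) :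
    (∀ ℓ : ℕ, ∃ v : Fin n, ipaMu A y ℓ v ≠ x v) ↔
      ∃ T : Finset (Fin n), T.Nonempty ∧ IsTermatiko A T ∧ ∀ v ∈ T, x v ≠ 0 := by
  obtain rfl : y = A *ᵥ x := funext hy
  refine ⟨exists_isTermatiko_of_forall_ipaMu_ne hbin hcol hx, ?_⟩
  rintro ⟨T, ⟨v, hv⟩, hT, hsupp⟩ ℓ
  exact ⟨v, (ipaMu_lt_of_isTermatiko hbin.matNonneg hcol hx hT hsupp hv ℓ).ne⟩
end

section
/- Let A be the 4×6 binary matrix whose rows are (1,1,0,0,0,1), (1,0,0,1,1,0), (0,1,1,0,0,1), (0,0,1,1,1,0) (measurement nodes c₁,…,c₄ and variable nodes v₁,…,v₆). Then: (a) T = {v₄} is a termatiko set of A; (b) for the signal x = (0,0,1,1,0,0) with y = Ax = (0,1,1,2), the IPA run on (y, A) satisfies μ^{(ℓ)}_{v₄} = 0 for every ℓ ≥ 0, while μ^{(ℓ)}_{v₃} = 1 = x_{v₃} for every ℓ ≥ 1. Hence the IPA recovers only v₃ and fails to fully recover x, even though {v₁,v₂,v₃,v₄} is a minimal stopping set containing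 at most |{v₁,v₂,v₃,v₄}| − 2 nonzero positions of x and the zero-valued measurement node c₁ is connected to it (a counter-example to [RDVD12, Thm. 2]). -/
open scoped Classical
open Finset

variable {C V : Type*} [Fintype C] [Fintype V]

/-- The 4×6 binary measurement matrix of the counter-example. -/
noncomputable def A14 : Fin 4 → Fin 6 → ℝ :=
  ![![1, 1, 0, 0, 0, 1],
    ![1, 0, 0, 1, 1, 0],
    ![0, 1, 1, 0, 0, 1],
    ![0, 0, 1, 1, 1, 0]]

/-- The signal `x = (0,0,1,1,0,0)`. -/
noncomputable def x14 : Fin 6 → ℝ := ![0, 0, 1, 1, 0, 0]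

/-- The measurement vector `y = A·x`. -/
noncomputable def y14 : Fin 4 → ℝ := fun c => ∑ v, A14 c v * x14 v

/-!
Columns `v₄` and `v₅` of `A` coincide, so `A·1_{v₄} = A·1_{v₅}` and
`y = A(1_{v₃} + 1_{v₄}) = A(1_{v₃} + 1_{v₅})`: the measurements cannot tell `v₄` from `v₅`, and the
lower bound at `v₄` never leaves `0`. Both runs reach a fixed point of the update map after at most
one step, so each is a finite computation: on `A·1_{v₄} = (0,1,0,1)` the bounds are `μ = 0`,
`M = (0,0,0,1,1,0)` from the start, and on `y = (0,1,1,2)` one step gives `μ = (0,0,1,0,0,0)`,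
`M = (0,0,1,1,1,0)`.

Restricted to `{v₁,…,v₄}`, the Tanner graph is the 8-cycle `v₁ c₁ v₂ c₃ v₃ c₄ v₄ c₂`, each of these
measurement nodes having exactly two neighbours in the set. A stopping set inside `{v₁,…,v₄}`
containing one node of the cycle therefore contains the next one, hence all of them.

Indices are `0`-based: `vᵢ` is `(i - 1 : Fin 6)` and `cⱼ` is `(j - 1 : Fin 4)`.
-/
noncomputable def ipaStep (A : C → V → ℝ) (y : C → ℝ) (p : (V → ℝ) × (V → ℝ)) :
    (V → ℝ) × (V → ℝ) :=
  (fun v => sSup {r : ℝ | ∃ c, A c v ≠ 0 ∧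
      r = max 0 ((y c - ∑ v' ∈ Finset.univ.filter (fun v' => v' ≠ v), A c v' * p.2 v') / A c v)},
   fun v => sInf {r : ℝ | ∃ c, A c v ≠ 0 ∧
      r = (y c - ∑ v' ∈ Finset.univ.filter (fun v' => v' ≠ v), A c v' * p.1 v') / A c v})

omit [Fintype C] in
theorem ipa_succ (A : C → V → ℝ) (y : C → ℝ) (ℓ : ℕ) :
    ipa A y (ℓ + 1) = ipaStep A y (ipa A y ℓ) :=
  rfl

omit [Fintype C] in
theorem ipa_add (A : C → V → ℝ) (y : C → ℝ) (ℓ k : ℕ) :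
    ipa A y (ℓ + k) = (ipaStep A y)^[ℓ] (ipa A y k) := by
  induction ℓ with
  | zero => simp
  | succ ℓ ih => rw [Nat.add_right_comm, Function.iterate_succ_apply', ← ih, ipa_succ]

omit [Fintype C] in
theorem ipa_add_eq_of_isFixedPt {A : C → V → ℝ} {y : C → ℝ} {k : ℕ} {p : (V → ℝ) × (V → ℝ)}
    (hk : ipa A y k = p) (hp : Function.IsFixedPt (ipaStep A y) p) (ℓ : ℕ) :
    ipa A y (ℓ + k) = p := by
  rw [ipa_add, hk, (hp.iterate ℓ).eq]

omit [Fintype V] in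
theorem StoppingSet.mem_of_NTc_subset_pair [DecidableEq V] {A : C → V → ℝ} {U W : Finset V}
    (hU : StoppingSet A U) (hUW : U ⊆ W) {c : C} {v w : V} (hv : v ∈ U) (hcv : A c v ≠ 0)
    (hc : NTc A W c ⊆ {v, w}) : w ∈ U := by
  by_contra hw
  have hcU : c ∈ NT A U := by simpa [NT] using ⟨v, hv, hcv⟩
  have hsub : NTc A U c ⊆ {v} := fun u hu => by
    obtain rfl | rfl : u = v ∨ u = w := by simpa using hc (filter_subset_filter _ hUW hu)
    · exact mem_singleton_self u
    · exact absurd (mem_of_mem_filter u hu) hw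
  exact absurd ((hU c hcU).trans (card_le_card hsub)) (by simp)

lemma y14_eq : y14 = ![0, 1, 1, 2] := by
  funext c; fin_cases c <;> simp [y14, x14, A14, Fin.sum_univ_six, one_add_one_eq_two]

lemma measT_A14 : measT A14 {3} = ![0, 1, 0, 1] := by
  funext c; fin_cases c <;> simp [measT, indVec, A14]

lemma ipa_zero_y14 : ipa A14 y14 0 = (0, ![0, 0, 1, 1, 1, 0]) := by
  rw [y14_eq]
  ext v
  · rfl
  · fin_cases v <;> simp [ipa, A14, Fin.exists_fin_succ, Set.ofPred_or]

lemma ipaStep_y14_zero :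
    ipaStep A14 y14 (0, ![0, 0, 1, 1, 1, 0]) = (![0, 0, 1, 0, 0, 0], ![0, 0, 1, 1, 1, 0]) := by
  rw [y14_eq]
  ext v <;> fin_cases v <;>
    simp [ipaStep, A14, Fin.exists_fin_succ, Set.ofPred_or, sum_filter, Fin.sum_univ_six,
      one_add_one_eq_two]

lemma isFixedPt_ipaStep_y14 :
    Function.IsFixedPt (ipaStep A14 y14) (![0, 0, 1, 0, 0, 0], ![0, 0, 1, 1, 1, 0]) := by
  rw [Function.IsFixedPt, y14_eq]
  ext v <;> fin_cases v <;>
    simp [ipaStep, A14, Fin.exists_fin_succ, Set.ofPred_or, sum_filter, Fin.sum_univ_six,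
      sub_eq_iff_eq_add, one_add_one_eq_two]

lemma ipa_succ_y14 (ℓ : ℕ) :
    ipa A14 y14 (ℓ + 1) = (![0, 0, 1, 0, 0, 0], ![0, 0, 1, 1, 1, 0]) :=
  ipa_add_eq_of_isFixedPt ((ipa_succ A14 y14 0).trans (by rw [ipa_zero_y14, ipaStep_y14_zero]))
    isFixedPt_ipaStep_y14 ℓ

lemma ipa_zero_measT_A14 : ipa A14 (measT A14 {3}) 0 = (0, ![0, 0, 0, 1, 1, 0]) := by
  rw [measT_A14]
  ext v
  · rfl
  · fin_cases v <;> simp [ipa, A14, Fin.exists_fin_succ, Set.ofPred_or]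

lemma isFixedPt_ipaStep_measT_A14 :
    Function.IsFixedPt (ipaStep A14 (measT A14 {3})) (0, ![0, 0, 0, 1, 1, 0]) := by
  rw [Function.IsFixedPt, measT_A14]
  ext v <;> fin_cases v <;>
    simp [ipaStep, A14, Fin.exists_fin_succ, Set.ofPred_or, sum_filter, Fin.sum_univ_six]

lemma ipa_measT_A14 (ℓ : ℕ) : ipa A14 (measT A14 {3}) ℓ = (0, ![0, 0, 0, 1, 1, 0]) :=
  ipa_add_eq_of_isFixedPt ipa_zero_measT_A14 isFixedPt_ipaStep_measT_A14 ℓ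

lemma isTermatiko_A14 : IsTermatiko A14 {3} := fun ℓ v => by
  simp [ipaMu, ipa_measT_A14]

lemma NTc_A14 : NTc A14 {0, 1, 2, 3} = ![{0, 1}, {0, 3}, {1, 2}, {2, 3}] := by
  funext c; fin_cases c <;> simp [NTc, A14, filter_insert, filter_singleton]

lemma stoppingSet_A14 : StoppingSet A14 {0, 1, 2, 3} := by
  intro c _
  fin_cases c <;> simp [NTc_A14]

lemma eq_of_stoppingSet_A14 (U : Finset (Fin 6)) (hU : U ⊆ {0, 1, 2, 3}) (hne : U.Nonempty)
    (hS : StoppingSet A14 U) : U = {0, 1, 2, 3} := by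
  have next : ∀ (c : Fin 4) {v w : Fin 6}, A14 c v ≠ 0 →
      NTc A14 {0, 1, 2, 3} c ⊆ {v, w} → v ∈ U → w ∈ U :=
    fun c v w hcv hc hv => hS.mem_of_NTc_subset_pair hU hv hcv hc
  have h01 := next 0 (v := 0) (w := 1) (by simp [A14]) (by simp [NTc_A14])
  have h12 := next 2 (v := 1) (w := 2) (by simp [A14]) (by simp [NTc_A14])
  have h23 := next 3 (v := 2) (w := 3) (by simp [A14]) (by simp [NTc_A14])
  have h30 := next 1 (v := 3) (w := 0) (by simp [A14]) (by rw [NTc_A14]; simp [pair_comm])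
  obtain ⟨v, hv⟩ := hne
  have h0 : 0 ∈ U := by
    rcases (by simpa using hU hv : v = 0 ∨ v = 1 ∨ v = 2 ∨ v = 3) with rfl | rfl | rfl | rfl
    exacts [hv, h30 (h23 (h12 hv)), h30 (h23 hv), h30 hv]
  exact hU.antisymm (by simp [insert_subset_iff, h0, h01 h0, h12 (h01 h0), h23 (h12 (h01 h0))])

/-- counter-example to [RDVD12, Thm. 2]: `{v₄}` is a termatiko set;
the IPA on `y = Ax = (0,1,1,2)` never recovers `v₄` but recovers `v₃` from
iteration 1 onwards, hence fails to fully recover `x`, although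
`{v₁,v₂,v₃,v₄}` is a minimal stopping set containing at most `|·|-2` nonzero
positions of `x` and the zero-valued measurement node `c₁` is connected to it. -/
theorem counterexample_RDVD12_thm2 :
    y14 = ![0, 1, 1, 2] ∧
    IsTermatiko A14 ({3} : Finset (Fin 6)) ∧
    (∀ ℓ : ℕ, ipaMu A14 y14 ℓ 3 = 0) ∧
    (∀ ℓ : ℕ, ipaMu A14 y14 (ℓ + 1) 2 = 1) ∧ x14 2 = 1 ∧
    (∀ ℓ : ℕ, ∃ v : Fin 6, ipaMu A14 y14 ℓ v ≠ x14 v) ∧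
    StoppingSet A14 ({0, 1, 2, 3} : Finset (Fin 6)) ∧
    (∀ U : Finset (Fin 6), U ⊆ {0, 1, 2, 3} → U.Nonempty → StoppingSet A14 U →
      U = {0, 1, 2, 3}) ∧
    (({0, 1, 2, 3} : Finset (Fin 6)).filter fun v => x14 v ≠ 0).card ≤
      ({0, 1, 2, 3} : Finset (Fin 6)).card - 2 ∧
    y14 0 = 0 ∧ (∃ v ∈ ({0, 1, 2, 3} : Finset (Fin 6)), A14 0 v ≠ 0) := by
  have mu_v4 : ∀ ℓ : ℕ, ipaMu A14 y14 ℓ 3 = 0 := by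
    rintro (_ | ℓ)
    · rfl
    · simp [ipaMu, ipa_succ_y14]
  have support_x14 : (({0, 1, 2, 3} : Finset (Fin 6)).filter fun v => x14 v ≠ 0) = {2, 3} := by
    ext v
    simp only [mem_filter]
    fin_cases v <;> simp [x14]
  refine ⟨y14_eq, isTermatiko_A14, mu_v4, fun ℓ => by simp [ipaMu, ipa_succ_y14], rfl,
    fun ℓ => ⟨3, by simp [mu_v4, x14]⟩, stoppingSet_A14, eq_of_stoppingSet_A14,
    by rw [support_x14]; rfl, by simp [y14_eq], 0, by simp, by simp [A14]⟩
end
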